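/- Let σ = (σ_k)_{k≥1} be a nonincreasing nonnegative real sequence in ℓ², let α > 0 and θ ∈ (0,1). Then d^α(σ) ≤ θ^{−1} d^{θα}(σ), where d^δ(σ) := (δ² r_δ(σ) + τ_δ(σ)²)^{1/2}. -/

import Mathlib

/-- `r_δ(σ)`: the number of entries of `σ` exceeding `δ`. -/
noncomputable def rCount (σ : ℕ → ℝ) (δ : ℝ) : ℕ := {k : ℕ | δ < σ k}.ncard

/-- `τ_δ(σ)`: the ℓ²-norm of the tail of `σ` after the first `r_δ(σ)` entries. -/
noncomputable def tauTail (σ : ℕ → ℝ) (δ : ℝ) : ℝ :=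
  Real.sqrt (∑' k : ℕ, if rCount σ δ ≤ k then σ k ^ 2 else 0)

/-- `d^δ(σ) := (δ² r_δ(σ) + τ_δ(σ)²)^{1/2}`. -/
noncomputable def dThresh (σ : ℕ → ℝ) (δ : ℝ) : ℝ :=
  Real.sqrt (δ ^ 2 * (rCount σ δ : ℝ) + tauTail σ δ ^ 2)

/-! Lowering the threshold from `δ` to `δ' ≤ δ` moves the entries with `δ' < σ k ≤ δ` from the
tail into the count. In `d^δ(σ)²` each of them contributes `σ k ^ 2 ≤ δ ^ 2`, no more than it would
cost in the count, so `d^δ(σ)² ≤ δ² r_δ'(σ) + τ_δ'(σ)² ≤ (δ / δ')² d^δ'(σ)²`. Take `δ' = θα`. -/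

noncomputable def tailSqSum (σ : ℕ → ℝ) (m : ℕ) : ℝ :=
  ∑' k : ℕ, if m ≤ k then σ k ^ 2 else 0

lemma tailSqSum_nonneg (σ : ℕ → ℝ) (m : ℕ) : 0 ≤ tailSqSum σ m :=
  tsum_nonneg fun k => by split <;> positivity

lemma summable_tailSqSum {σ : ℕ → ℝ} (hσ : Summable fun k => σ k ^ 2) (m : ℕ) :
    Summable fun k => if m ≤ k then σ k ^ 2 else 0 :=
  hσ.of_nonneg_of_le (fun k => by split <;> positivity) fun k => by split <;> simp [sq_nonneg]

lemma tailSqSum_eq_sum_Ico_add {σ : ℕ → ℝ} (hσ : Summable fun k => σ k ^ 2) {m n : ℕ}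
    (hmn : m ≤ n) : tailSqSum σ m = ∑ k ∈ Finset.Ico m n, σ k ^ 2 + tailSqSum σ n := by
  have hsplit : ∀ k, (if m ≤ k then σ k ^ 2 else 0)
      = (if k ∈ Finset.Ico m n then σ k ^ 2 else 0) + (if n ≤ k then σ k ^ 2 else 0) := by
    intro k
    simp only [Finset.mem_Ico]
    split_ifs <;> first | omega | simp
  rw [tailSqSum, tsum_congr hsplit, (summable_of_ne_finset_zero fun k hk => if_neg hk).tsum_add
    (summable_tailSqSum hσ n), tsum_eq_sum fun k hk => if_neg hk, Finset.sum_ite_mem,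
    Finset.inter_self, tailSqSum]

lemma tauTail_sq (σ : ℕ → ℝ) (δ : ℝ) : tauTail σ δ ^ 2 = tailSqSum σ (rCount σ δ) :=
  Real.sq_sqrt (tailSqSum_nonneg σ _)

lemma dThresh_sq (σ : ℕ → ℝ) (δ : ℝ) :
    dThresh σ δ ^ 2 = δ ^ 2 * rCount σ δ + tailSqSum σ (rCount σ δ) := by
  rw [dThresh, Real.sq_sqrt (by positivity [tailSqSum_nonneg σ (rCount σ δ)]), tauTail_sq]

lemma Memℓp.summable_sq {ι : Type*} {σ : ι → ℝ} (hσ : Memℓp σ 2) :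
    Summable fun k => σ k ^ 2 := by
  simpa [Real.norm_eq_abs, sq_abs] using hσ.summable (by norm_num)

lemma finite_setOf_lt_of_summable_sq {ι : Type*} {σ : ι → ℝ} (hσ : Summable fun k => σ k ^ 2)
    {δ : ℝ} (hδ : 0 < δ) : {k | δ < σ k}.Finite := by
  refine (Filter.eventually_cofinite.mp
    (hσ.tendsto_cofinite_zero.eventually (gt_mem_nhds (pow_pos hδ 2)))).subset fun k hk => ?_
  exact not_lt.mpr (pow_le_pow_left₀ hδ.le hk.le 2)

lemma lt_rCount_iff {σ : ℕ → ℝ} (hσ : Antitone σ) {δ : ℝ} (hfin : {k | δ < σ k}.Finite)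
    {k : ℕ} : k < rCount σ δ ↔ δ < σ k := by
  constructor
  · intro hk
    by_contra! hle
    have hsub : {j | δ < σ j} ⊆ Set.Iio k := fun j hj =>
      lt_of_not_ge fun hkj => (hj.trans_le (hσ hkj)).not_ge hle
    have := Set.ncard_le_ncard hsub (Set.finite_Iio k)
    rw [Set.ncard_Iio_nat] at this
    exact hk.not_ge this
  · intro hk
    have hsub : Set.Iic k ⊆ {j | δ < σ j} := fun j hj => hk.trans_le (hσ hj)
    have := Set.ncard_le_ncard hsub hfin
    rwa [Set.ncard_Iic_nat, Nat.add_one_le_iff] at this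

lemma rCount_anti {σ : ℕ → ℝ} {δ δ' : ℝ} (hfin : {k | δ' < σ k}.Finite) (h : δ' ≤ δ) :
    rCount σ δ ≤ rCount σ δ' :=
  Set.ncard_le_ncard (fun _ hk => h.trans_lt hk) hfin

lemma sq_dThresh_le {σ : ℕ → ℝ} (hanti : Antitone σ) (hσ : Summable fun k => σ k ^ 2)
    {δ δ' : ℝ} (hδ' : 0 < δ') (h : δ' ≤ δ) :
    dThresh σ δ ^ 2 ≤ δ ^ 2 * rCount σ δ' + tailSqSum σ (rCount σ δ') := by
  have hfin' := finite_setOf_lt_of_summable_sq hσ hδ'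
  have hfin := finite_setOf_lt_of_summable_sq hσ (hδ'.trans_le h)
  set r := rCount σ δ
  set r' := rCount σ δ'
  have hrr' : r ≤ r' := rCount_anti hfin' h
  -- between the two counts, `δ' < σ k ≤ δ`
  have hmid : ∀ k ∈ Finset.Ico r r', σ k ^ 2 ≤ δ ^ 2 := by
    intro k hk
    rw [Finset.mem_Ico, ← not_lt, lt_rCount_iff hanti hfin, lt_rCount_iff hanti hfin'] at hk
    exact pow_le_pow_left₀ (hδ'.trans hk.2).le (not_lt.mp hk.1) 2
  calc dThresh σ δ ^ 2 = δ ^ 2 * r + (∑ k ∈ Finset.Ico r r', σ k ^ 2 + tailSqSum σ r') := by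
        rw [dThresh_sq, tailSqSum_eq_sum_Ico_add hσ hrr']
    _ ≤ δ ^ 2 * r + ((r' - r : ℕ) * δ ^ 2 + tailSqSum σ r') := by
        gcongr
        simpa using Finset.sum_le_card_nsmul _ _ _ hmid
    _ = δ ^ 2 * r' + tailSqSum σ r' := by
        rw [Nat.cast_sub hrr']
        ring

lemma dThresh_le_div_mul_dThresh {σ : ℕ → ℝ} (hanti : Antitone σ)
    (hσ : Summable fun k => σ k ^ 2) {δ δ' : ℝ} (hδ' : 0 < δ') (h : δ' ≤ δ) :
    dThresh σ δ ≤ δ / δ' * dThresh σ δ' := by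
  have hratio : 1 ≤ (δ / δ') ^ 2 := one_le_pow₀ ((one_le_div hδ').mpr h)
  have hT := tailSqSum_nonneg σ (rCount σ δ')
  refine le_of_sq_le_sq ?_ (mul_nonneg (div_nonneg (hδ'.le.trans h) hδ'.le) (Real.sqrt_nonneg _))
  calc dThresh σ δ ^ 2 ≤ δ ^ 2 * rCount σ δ' + tailSqSum σ (rCount σ δ') :=
        sq_dThresh_le hanti hσ hδ' h
    _ ≤ (δ / δ') ^ 2 * (δ' ^ 2 * rCount σ δ' + tailSqSum σ (rCount σ δ')) := by
        rw [mul_add, ← mul_assoc, ← mul_pow, div_mul_cancel₀ _ hδ'.ne']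
        gcongr
        exact le_mul_of_one_le_left hT hratio
    _ = (δ / δ' * dThresh σ δ') ^ 2 := by
        rw [mul_pow, dThresh_sq]

theorem dThresh_inverse_bound_general (σ : ℕ → ℝ) (hanti : Antitone σ)
    (hl2 : Memℓp σ 2) (α θ : ℝ) (hα : 0 < α) (hθ0 : 0 < θ) (hθ1 : θ < 1) :
    dThresh σ α ≤ θ⁻¹ * dThresh σ (θ * α) := by
  have h := dThresh_le_div_mul_dThresh hanti hl2.summable_sq (mul_pos hθ0 hα)
    (mul_le_of_le_one_left hα.le hθ1.le)
  rwa [div_mul_cancel_right₀ hα.ne'] at h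

/-- **Limited decay of the thresholding error:** `d^α(σ) ≤ θ⁻¹ d^{θα}(σ)` for `θ ∈ (0,1)`. -/
theorem dThresh_inverse_bound (σ : ℕ → ℝ) (hanti : Antitone σ) (hpos : ∀ k, 0 ≤ σ k)
    (hl2 : Memℓp σ 2) (α θ : ℝ) (hα : 0 < α) (hθ0 : 0 < θ) (hθ1 : θ < 1) :
    dThresh σ α ≤ θ⁻¹ * dThresh σ (θ * α) :=
  dThresh_inverse_bound_general σ hanti hl2 α θ hα hθ0 hθ1
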